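/- arXiv:2410.01686 — 3 statements merged into one kernel-verified Lean document; each statement's English description precedes it below -/
import Mathlib

section
/- Let s be uniform on [−1,1], t uniform on (1,c] with c > 1, independent, and conditionally on (s,t) let X₁,...,X_n be i.i.d. uniform on [s,t] with n ≥ 2. Then P(X_i ∈ [−1,1] for all i) = (1/(2(c−1)(n−1))) ∫_{−1}^{1} (1−s)(1 − ((1−s)/(c−s))^{n−1}) ds. -/
open intervalIntegral

/-- Event A.1 probability: `s` uniform on `[−1,1]` (density `1/2`), `t` uniform
on `(1,c]` (density `1/(c−1)`), and conditionally on `(s,t)` the `n` i.i.d.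
uniform samples on `[s,t]` all land in `[−1,1]` with probability
`((1−s)/(t−s))^n`.  Integrating yields the stated closed form. -/
theorem eventA1_prob (c : ℝ) (hc : 1 < c) (n : ℕ) (hn : 2 ≤ n) :
    ∫ s in (-1 : ℝ)..1, ∫ t in (1 : ℝ)..c,
        (1 / 2) * (1 / (c - 1)) * ((1 - s) / (t - s)) ^ n
      = (1 / (2 * (c - 1) * (n - 1))) *
          ∫ s in (-1 : ℝ)..1,
            (1 - s) * (1 - ((1 - s) / (c - s)) ^ (n - 1)) := by
  rw [← intervalIntegral.integral_const_mul]
  apply intervalIntegral.integral_congr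
  intro s hs
  rw [Set.uIcc_of_le (by norm_num : (-1:ℝ) ≤ 1)] at hs
  obtain ⟨m, rfl⟩ : ∃ m, n = m + 1 := ⟨n - 1, by omega⟩
  have hm : 1 ≤ m := by omega
  have hm0 : (m:ℝ) ≠ 0 := Nat.cast_ne_zero.mpr (by omega)
  simp only [Nat.add_sub_cancel]
  rcases hs.2.eq_or_lt with h1 | h1
  · subst h1
    simp
  · have ha : 0 < 1 - s := by linarith
    have hb : 0 < c - s := by linarith
    have hab : 1 - s ≤ c - s := by linarith
    have key : Set.EqOn (fun t => (1/2)*(1/(c-1))*((1-s)/(t-s))^(m+1))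
        (fun t => ((1/2)*(1/(c-1))*(1-s)^(m+1)) * (t - s)^(-(m+1:ℤ)))
        (Set.uIcc (1:ℝ) c) := by
      intro t ht
      rw [Set.uIcc_of_le hc.le] at ht
      have hts : 0 < t - s := by linarith [ht.1]
      simp only
      rw [div_pow, zpow_neg, show ((m:ℤ)+1) = ((m+1:ℕ):ℤ) from by push_cast; ring,
        zpow_natCast]
      field_simp
    rw [intervalIntegral.integral_congr key, intervalIntegral.integral_const_mul,
      intervalIntegral.integral_comp_sub_right (fun x => x^(-(m+1:ℤ))) s,
      integral_zpow (Or.inr ⟨by omega, by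
        rw [Set.uIcc_of_le hab]
        intro h
        exact absurd h.1 (by linarith)⟩)]
    have he : (-(m+1:ℤ)+1) = -(m:ℤ) := by ring
    rw [he]
    rw [zpow_neg, zpow_neg, zpow_natCast, zpow_natCast, div_pow]
    have hbm : (c - s)^m ≠ 0 := pow_ne_zero _ hb.ne'
    have ham : (1 - s)^m ≠ 0 := pow_ne_zero _ ha.ne'
    have hc1 : c - 1 ≠ 0 := by linarith
    push_cast
    field_simp
    ring
end

section
/- For c > 1 and n ≥ 2: (1/(2(c−1)(n−1))) ∫_{−1}^{1} (1−s)(1 − ((1−s)/(c−s))^{n−1}) ds ≤ (3(1 − 1/c^{n−1}) + 1)/(4(n−1)(c−1)). -/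
open intervalIntegral

/-- Bounding the Event A.1 probability:
`(1/(2(c−1)(n−1))) ∫_{−1}^{1} (1−s)(1 − ((1−s)/(c−s))^{n−1}) ds
  ≤ (3(1 − 1/c^{n−1}) + 1)/(4(n−1)(c−1))`. -/
theorem eventA1_prob_bound (c : ℝ) (hc : 1 < c) (n : ℕ) (hn : 2 ≤ n) :
    (1 / (2 * (c - 1) * ((n : ℝ) - 1))) *
        (∫ s in (-1 : ℝ)..1, (1 - s) * (1 - ((1 - s) / (c - s)) ^ (n - 1)))
      ≤ (3 * (1 - 1 / c ^ (n - 1)) + 1) / (4 * ((n : ℝ) - 1) * (c - 1)) := by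
  set m := n - 1 with hm
  have hcont : ContinuousOn (fun s : ℝ => (1 - s) * (1 - ((1 - s) / (c - s)) ^ m))
      (Set.Icc (-1 : ℝ) 1) := by
    apply ContinuousOn.mul
    · fun_prop
    · apply ContinuousOn.sub continuousOn_const
      apply ContinuousOn.pow
      apply ContinuousOn.div
      · fun_prop
      · fun_prop
      · intro x hx
        have : x ≤ 1 := hx.2
        nlinarith
  have hI1 : IntervalIntegrable (fun s : ℝ => (1 - s) * (1 - ((1 - s) / (c - s)) ^ m))
      MeasureTheory.volume (-1) 0 := by
    apply (hcont.mono _).intervalIntegrable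
    rw [Set.uIcc_of_le (by norm_num)]
    intro x hx; exact ⟨hx.1, le_trans hx.2 (by norm_num)⟩
  have hI2 : IntervalIntegrable (fun s : ℝ => (1 - s) * (1 - ((1 - s) / (c - s)) ^ m))
      MeasureTheory.volume 0 1 := by
    apply (hcont.mono _).intervalIntegrable
    rw [Set.uIcc_of_le (by norm_num)]
    intro x hx; exact ⟨le_trans (by norm_num) hx.1, hx.2⟩
  have hsplit : (∫ s in (-1 : ℝ)..1, (1 - s) * (1 - ((1 - s) / (c - s)) ^ m))
      = (∫ s in (-1 : ℝ)..0, (1 - s) * (1 - ((1 - s) / (c - s)) ^ m))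
        + (∫ s in (0 : ℝ)..1, (1 - s) * (1 - ((1 - s) / (c - s)) ^ m)) :=
    (integral_add_adjacent_intervals hI1 hI2).symm
  -- bound first piece
  have hg1 : IntervalIntegrable (fun s : ℝ => (1 - s) * (1 - (1 / c) ^ m))
      MeasureTheory.volume (-1) 0 := by
    apply Continuous.intervalIntegrable; fun_prop
  have hb1 : (∫ s in (-1 : ℝ)..0, (1 - s) * (1 - ((1 - s) / (c - s)) ^ m))
      ≤ ∫ s in (-1 : ℝ)..0, (1 - s) * (1 - (1 / c) ^ m) := by
    apply integral_mono_on (by norm_num) hI1 hg1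
    intro x hx
    obtain ⟨hx1, hx2⟩ := hx
    have hcs : (0 : ℝ) < c - x := by nlinarith
    have hr : (1 / c) ≤ (1 - x) / (c - x) := by
      rw [div_le_div_iff₀ (by linarith) hcs]
      nlinarith
    have hrp : (1 / c) ^ m ≤ ((1 - x) / (c - x)) ^ m :=
      pow_le_pow_left₀ (by positivity) hr m
    nlinarith
  -- bound second piece
  have hg2 : IntervalIntegrable (fun s : ℝ => (1 - s)) MeasureTheory.volume 0 1 := by
    apply Continuous.intervalIntegrable; fun_prop
  have hb2 : (∫ s in (0 : ℝ)..1, (1 - s) * (1 - ((1 - s) / (c - s)) ^ m))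
      ≤ ∫ s in (0 : ℝ)..1, (1 - s) := by
    apply integral_mono_on (by norm_num) hI2 hg2
    intro x hx
    obtain ⟨hx1, hx2⟩ := hx
    have hcs : (0 : ℝ) < c - x := by nlinarith
    have hr : (0 : ℝ) ≤ (1 - x) / (c - x) := div_nonneg (by linarith) (by linarith)
    have hrp : (0 : ℝ) ≤ ((1 - x) / (c - x)) ^ m := pow_nonneg hr m
    nlinarith
  -- compute the comparison integrals
  have hlin : ∀ a b : ℝ, (∫ s in a..b, (1 - s)) = (b - a) - (b ^ 2 - a ^ 2) / 2 := by
    intro a b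
    rw [integral_sub intervalIntegrable_const intervalIntegrable_id]
    simp [integral_id]
  have hv1 : (∫ s in (-1 : ℝ)..0, (1 - s) * (1 - (1 / c) ^ m))
      = 3 / 2 * (1 - (1 / c) ^ m) := by
    rw [integral_mul_const, hlin]; norm_num
  have hv2 : (∫ s in (0 : ℝ)..1, (1 - s)) = 1 / 2 := by
    rw [hlin]; norm_num
  have hIbound : (∫ s in (-1 : ℝ)..1, (1 - s) * (1 - ((1 - s) / (c - s)) ^ m))
      ≤ (3 * (1 - 1 / c ^ m) + 1) / 2 := by
    rw [hsplit]
    have : (1 / c) ^ m = 1 / c ^ m := by rw [div_pow, one_pow]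
    calc _ ≤ 3 / 2 * (1 - (1 / c) ^ m) + 1 / 2 := by
              rw [← hv1, ← hv2]; exact add_le_add hb1 hb2
      _ = (3 * (1 - 1 / c ^ m) + 1) / 2 := by rw [this]; ring
  have hn1 : (1 : ℝ) ≤ (n : ℝ) - 1 := by
    have : (2 : ℝ) ≤ (n : ℝ) := by exact_mod_cast hn
    linarith
  have hpos : (0 : ℝ) < 2 * (c - 1) * ((n : ℝ) - 1) := by nlinarith
  rw [div_eq_mul_inv (3 * (1 - 1 / c ^ m) + 1), ge_iff_le.symm] at *
  have key : (1 / (2 * (c - 1) * ((n : ℝ) - 1))) *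
      (∫ s in (-1 : ℝ)..1, (1 - s) * (1 - ((1 - s) / (c - s)) ^ m))
      ≤ (1 / (2 * (c - 1) * ((n : ℝ) - 1))) * ((3 * (1 - 1 / c ^ m) + 1) / 2) :=
    mul_le_mul_of_nonneg_left hIbound (by positivity)
  calc _ ≤ (1 / (2 * (c - 1) * ((n : ℝ) - 1))) * ((3 * (1 - 1 / c ^ m) + 1) / 2) := key
    _ = (3 * (1 - 1 / c ^ m) + 1) * (4 * ((n : ℝ) - 1) * (c - 1))⁻¹ := by
        rw [show (4 * ((n : ℝ) - 1) * (c - 1)) = (2 * (c - 1) * ((n : ℝ) - 1)) * 2 from by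
          ring, mul_inv]
        ring
end

section
/- Let s be uniform on [−c,−1), t uniform on (1,c] with c > 1, independent, and conditionally on (s,t) let X₁,...,X_n be i.i.d. uniform on [s,t] with n ≥ 3. Then P(X_i ∈ [−1,1] for all i) = (4 − 8(2/(1+c))^{n−2} + 4(1/c)^{n−2})/((c−1)²(n−1)(n−2)). -/
/-!
The integrand depends on `t - s` only, so its integral over the rectangle `[-c, -1] × [1, c]`
is an alternating sum of a second antiderivative `H` of `u ↦ (2 / u) ^ n` at the corner
differences `2c`, `1 + c` (twice) and `2`; here `H u = 4 / ((n - 1) (n - 2)) * (2 / u) ^ (n - 2)`.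
-/

open MeasureTheory intervalIntegral Set
open scoped Interval

theorem hasDerivAt_div_pow (a : ℝ) (k : ℕ) {u : ℝ} (hu : u ≠ 0) :
    HasDerivAt (fun u => (a / u) ^ k) (-k * (a / u) ^ k / u) u := by
  refine (((hasDerivAt_inv hu).const_mul a).fun_pow k).congr_deriv ?_
  rcases k with _ | k
  · simp
  · rw [Nat.add_sub_cancel, pow_succ]
    push_cast
    ring

theorem integral_integral_comp_sub {f G H : ℝ → ℝ} {U : Set ℝ} {a b p q : ℝ}
    (hG : ∀ u ∈ U, HasDerivAt G (f u) u) (hH : ∀ u ∈ U, HasDerivAt H (G u) u)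
    (hf : ContinuousOn f U) (hU : ∀ s ∈ [[p, q]], ∀ t ∈ [[a, b]], t - s ∈ U) :
    ∫ s in p..q, ∫ t in a..b, f (t - s) = H (b - p) - H (b - q) - H (a - p) + H (a - q) := by
  have inner : EqOn (fun s => ∫ t in a..b, f (t - s)) (fun s => G (b - s) - G (a - s)) [[p, q]] :=
    fun s hs => integral_eq_sub_of_hasDerivAt
      (fun t ht => (hG _ (hU s hs t ht)).comp_sub_const t s)
      (ContinuousOn.intervalIntegrable <| hf.comp (continuousOn_id.sub continuousOn_const)
        fun t ht => hU s hs t ht)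
  have integrable : ∀ x ∈ [[a, b]], IntervalIntegrable (fun s => G (x - s)) volume p q :=
    fun x hx => ContinuousOn.intervalIntegrable <|
      (HasDerivAt.continuousOn hG).comp (continuousOn_const.sub continuousOn_id)
        fun s hs => hU s hs x hx
  have outer : ∀ x ∈ [[a, b]], ∫ s in p..q, G (x - s) = H (x - p) - H (x - q) := by
    intro x hx
    rw [integral_eq_sub_of_hasDerivAt (f := fun s => -H (x - s))
      (fun s hs => by simpa using ((hH _ (hU s hs x hx)).comp_const_sub x s).fun_neg)
      (integrable x hx)]
    ring
  rw [integral_congr inner, integral_sub (integrable b right_mem_uIcc)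
    (integrable a left_mem_uIcc), outer b right_mem_uIcc, outer a left_mem_uIcc]
  ring

/-- Event B.2 probability for `n ≥ 3`: `s` uniform on `[−c,−1)`, `t` uniform on
`(1,c]` (each with density `1/(c−1)`), and conditionally on `(s,t)` the `n`
i.i.d. uniform samples on `[s,t]` all land in `[−1,1]` with probability
`(2/(t−s))^n`.  Integrating yields the stated closed form. -/
theorem eventB2_prob (c : ℝ) (hc : 1 < c) (n : ℕ) (hn : 3 ≤ n) :
    ∫ s in (-c)..(-1 : ℝ), ∫ t in (1 : ℝ)..c,
        (1 / (c - 1)) ^ 2 * (2 / (t - s)) ^ n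
      = (4 - 8 * (2 / (1 + c)) ^ (n - 2) + 4 * (1 / c) ^ (n - 2)) /
          ((c - 1) ^ 2 * ((n : ℝ) - 1) * ((n : ℝ) - 2)) := by
  obtain ⟨k, rfl⟩ : ∃ k, n = k + 2 := ⟨n - 2, by omega⟩
  have hk : (k : ℝ) ≠ 0 := by norm_cast; omega
  set G : ℝ → ℝ := fun u => -(2 / (k + 1)) * (2 / u) ^ (k + 1)
  set H : ℝ → ℝ := fun u => 4 / ((k + 1) * k) * (2 / u) ^ k
  have hG : ∀ u ∈ Ioi (0 : ℝ), HasDerivAt G ((2 / u) ^ (k + 2)) u := fun u hu =>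
    ((hasDerivAt_div_pow 2 (k + 1) hu.ne').const_mul _).congr_deriv (by push_cast; field_simp; ring)
  have hH : ∀ u ∈ Ioi (0 : ℝ), HasDerivAt H (G u) u := fun u hu =>
    ((hasDerivAt_div_pow 2 k hu.ne').const_mul _).congr_deriv (by simp only [G]; field_simp; ring)
  have hpos : ∀ s ∈ [[-c, -1]], ∀ t ∈ [[1, c]], t - s ∈ Ioi 0 := by
    intro s hs t ht
    rw [uIcc_of_le (neg_le_neg hc.le), mem_Icc] at hs
    rw [uIcc_of_le hc.le, mem_Icc] at ht
    exact mem_Ioi.2 (by linarith [hs.2, ht.1])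
  simp only [intervalIntegral.integral_const_mul]
  rw [integral_integral_comp_sub hG hH
    ((continuousOn_const.div continuousOn_id fun u hu => hu.ne').pow _) hpos]
  simp only [H, Nat.add_sub_cancel, show c - -c = 2 * c by ring, show c - -1 = 1 + c by ring,
    show (1 : ℝ) - -c = 1 + c by ring, show (1 : ℝ) - -1 = 2 by norm_num]
  push_cast
  rw [show (2 : ℝ) / (2 * c) = 1 / c by field_simp, div_self two_ne_zero, one_pow,
    show (k : ℝ) + 2 - 1 = k + 1 by ring, show (k : ℝ) + 2 - 2 = k by ring]
  field_simp
  ring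
end
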